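/- arXiv:1211.4188 — 3 statements merged into one kernel-verified Lean document; each statement's English description precedes it below -/
import Mathlib

section
/- Let V be a finite-dimensional complex inner product space and d : V → V a linear map with d ∘ d = 0; let d* be the adjoint of d and Δ = d ∘ d* + d* ∘ d. Let W ⊆ V be a linear subspace with d(W) ⊆ W and d*(W) ⊆ W. Assume the inclusion W ⊆ V is a quasi-isomorphism of complexes, i.e. (i) for every x ∈ ker d there exist w ∈ W ∩ ker d and v ∈ V with x = w + d v, and (ii) every w ∈ W ∩ ker d that lies in range d lies in d(W). Then ker Δ ⊆ W. -/
open LinearMap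

/-!
A harmonic `x` is both closed and coclosed, since `⟪Δ x, x⟫ = ‖d* x‖² + ‖d x‖²`. Surjectivity on
cohomology writes `x = w + d v` with `w ∈ W`. Split `v = a + b` with `a ∈ W`, `b ∈ Wᗮ`; the
`d*`-invariance of `W` makes `Wᗮ` `d`-invariant, so `x = (w + d a) + d b` is the orthogonal
decomposition of `x` along `W ⊕ Wᗮ`. But `d b ⊥ x` because `d* x = 0`, hence `d b = 0`.
-/

namespace LinearMap

variable {𝕜 V : Type*} [RCLike 𝕜] [NormedAddCommGroup V] [InnerProductSpace 𝕜 V]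
  [FiniteDimensional 𝕜 V]

theorem re_inner_laplacian_apply_self (d : V →ₗ[𝕜] V) (x : V) :
    RCLike.re (inner 𝕜 ((d ∘ₗ adjoint d + adjoint d ∘ₗ d) x) x) =
      ‖adjoint d x‖ ^ 2 + ‖d x‖ ^ 2 := by
  rw [add_apply, comp_apply, comp_apply, inner_add_left, ← adjoint_inner_right d (adjoint d x) x,
    adjoint_inner_left d x (d x), map_add, inner_self_eq_norm_sq, inner_self_eq_norm_sq]

theorem ker_laplacian (d : V →ₗ[𝕜] V) :
    ker (d ∘ₗ adjoint d + adjoint d ∘ₗ d) = ker d ⊓ ker (adjoint d) := by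
  ext x
  simp only [Submodule.mem_inf, mem_ker]
  constructor
  · intro hx
    have hnorms := re_inner_laplacian_apply_self d x
    rw [hx, inner_zero_left, map_zero] at hnorms
    constructor <;> rw [← norm_eq_zero] <;> nlinarith [sq_nonneg ‖adjoint d x‖, sq_nonneg ‖d x‖,
      norm_nonneg (adjoint d x), norm_nonneg (d x)]
  · rintro ⟨hdx, hd'x⟩
    simp [hdx, hd'x]

theorem apply_mem_orthogonal_of_forall_adjoint_mem {d : V →ₗ[𝕜] V} {W : Submodule 𝕜 V}
    (hWd' : ∀ x ∈ W, adjoint d x ∈ W) {b : V} (hb : b ∈ Wᗮ) : d b ∈ Wᗮ := by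
  intro y hy
  rw [← adjoint_inner_left]
  exact hb _ (hWd' y hy)

theorem sup_range_inf_ker_adjoint_le {d : V →ₗ[𝕜] V} {W : Submodule 𝕜 V}
    (hWd : ∀ x ∈ W, d x ∈ W) (hWd' : ∀ x ∈ W, adjoint d x ∈ W) :
    (W ⊔ range d) ⊓ ker (adjoint d) ≤ W := by
  rintro x ⟨hxsup, hxcoclosed⟩
  obtain ⟨w, hw, _, ⟨v, rfl⟩, hx⟩ := Submodule.mem_sup.mp hxsup
  obtain ⟨a, ha, b, hb, rfl⟩ := W.exists_add_mem_mem_orthogonal v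
  have hdb : d b ∈ Wᗮ := apply_mem_orthogonal_of_forall_adjoint_mem hWd' hb
  have hy : w + d a ∈ W := W.add_mem hw (hWd a ha)
  have hdb_x : inner 𝕜 (d b) x = 0 := by
    rw [← adjoint_inner_right, mem_ker.mp hxcoclosed, inner_zero_right]
  have hdb_zero : d b = 0 := by
    rw [← inner_self_eq_zero (𝕜 := 𝕜)]
    calc inner 𝕜 (d b) (d b) = inner 𝕜 (d b) x - inner 𝕜 (d b) (w + d a) := by
          rw [← inner_sub_right, ← hx, map_add]; abel_nf
      _ = 0 := by rw [hdb_x, Submodule.inner_left_of_mem_orthogonal hy hdb, sub_zero]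
  rw [← hx, map_add, hdb_zero, add_zero]
  exact hy

end LinearMap

theorem stmt_3_general {V : Type*} [NormedAddCommGroup V] [InnerProductSpace ℂ V]
    [FiniteDimensional ℂ V] (d : V →ₗ[ℂ] V)
    (W : Submodule ℂ V)
    (hWd : ∀ x ∈ W, d x ∈ W)
    (hWd' : ∀ x ∈ W, adjoint d x ∈ W)
    (hsurj : ∀ x ∈ ker d, ∃ w ∈ W, w ∈ ker d ∧ ∃ v : V, x = w + d v) :
    ker (d ∘ₗ adjoint d + adjoint d ∘ₗ d) ≤ W := by
  intro x hx
  rw [ker_laplacian] at hx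
  obtain ⟨w, hw, -, v, rfl⟩ := hsurj x hx.1
  exact sup_range_inf_ker_adjoint_le hWd hWd'
    ⟨Submodule.add_mem_sup hw (mem_range_self d v), hx.2⟩

/-- A `d`- and `d*`-invariant subspace `W` of a finite-dimensional complex inner product
space that is quasi-isomorphically included in `(V, d)` contains all harmonic elements,
i.e. `ker Δ ⊆ W` where `Δ = d ∘ d* + d* ∘ d`. -/
theorem stmt_3 {V : Type*} [NormedAddCommGroup V] [InnerProductSpace ℂ V]
    [FiniteDimensional ℂ V] (d : V →ₗ[ℂ] V) (hd : d ∘ₗ d = 0)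
    (W : Submodule ℂ V)
    (hWd : ∀ x ∈ W, d x ∈ W)
    (hWd' : ∀ x ∈ W, adjoint d x ∈ W)
    (hsurj : ∀ x ∈ ker d, ∃ w ∈ W, w ∈ ker d ∧ ∃ v : V, x = w + d v)
    (hinj : ∀ w ∈ W, w ∈ ker d → w ∈ range d → ∃ u ∈ W, d u = w) :
    ker (d ∘ₗ adjoint d + adjoint d ∘ₗ d) ≤ W :=
  stmt_3_general d W hWd hWd' hsurj
end

section
/- Let n be a positive natural number and α a homomorphism from the additive group (ℂⁿ, +) to the multiplicative group ℂ* of nonzero complex numbers which is smooth as a map ℂⁿ → ℂ. Then there exists a unique homomorphism β from (ℂⁿ, +) to ℂ* with ‖β(z)‖ = 1 for all z ∈ ℂⁿ such that the map z ↦ α(z) · β(z)⁻¹ is holomorphic (differentiable over ℂ) as a map ℂⁿ → ℂ. -/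
open Complex Bornology Set

private lemma char_exp {n : ℕ} (α : (Fin n → ℂ) → ℂ) (hsmooth : ContDiff ℝ (⊤ : ℕ∞) α)
    (h0 : ∀ z, α z ≠ 0) (hmul : ∀ z w, α (z + w) = α z * α w) :
    ∀ z, α z = Complex.exp (fderiv ℝ α 0 z) := by
  have hd : Differentiable ℝ α := hsmooth.differentiable (by simp)
  set c : (Fin n → ℂ) →L[ℝ] ℂ := fderiv ℝ α 0 with hc
  have hα0 : α 0 = 1 := by
    have h : α 0 * α 0 = α 0 * 1 := by simpa using (hmul 0 0).symm
    exact mul_left_cancel₀ (h0 0) h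
  have hfder : ∀ w : Fin n → ℂ, fderiv ℝ α w = α w • c := by
    intro w
    have h1 : HasFDerivAt (fun h : Fin n → ℂ => α (w + h)) (fderiv ℝ α w) 0 := by
      have hw : HasFDerivAt α (fderiv ℝ α w) (w + id (0 : Fin n → ℂ)) := by
        simpa using (hd w).hasFDerivAt
      have := hw.comp 0 ((hasFDerivAt_id (0 : Fin n → ℂ)).const_add w)
      simpa [Function.comp_def] using this
    have h2 : HasFDerivAt (fun h : Fin n → ℂ => α w * α h) (α w • c) 0 :=
      ((hd 0).hasFDerivAt).const_mul (α w)
    have heq : (fun h : Fin n → ℂ => α (w + h)) = fun h => α w * α h := by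
      funext h; exact hmul w h
    rw [heq] at h1
    exact h1.unique h2
  intro z
  have hder : ∀ t : ℝ, HasDerivAt (fun t : ℝ => α (t • z)) (α (t • z) * c z) t := by
    intro t
    have hin : HasDerivAt (fun t : ℝ => t • z) z t := by
      simpa using (hasDerivAt_id t).smul_const z
    have := ((hd (t • z)).hasFDerivAt).comp_hasDerivAt t hin
    rw [hfder (t • z)] at this
    simpa [smul_eq_mul, Function.comp_def] using this
  have hexp : ∀ t : ℝ, HasDerivAt (fun t : ℝ => Complex.exp (-((t : ℂ) * c z)))
      (-(c z) * Complex.exp (-((t : ℂ) * c z))) t := by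
    intro t
    have e : HasDerivAt (fun s : ℂ => Complex.exp (-(s * c z)))
        (-(c z) * Complex.exp (-((t:ℂ) * c z))) (t : ℂ) := by
      have := (((hasDerivAt_id (t : ℂ)).mul_const (c z)).neg).cexp
      simpa [mul_comm] using this
    exact e.comp_ofReal
  have hg : ∀ t : ℝ, HasDerivAt (fun t : ℝ => α (t • z) * Complex.exp (-((t : ℂ) * c z))) 0 t := by
    intro t
    have := (hder t).fun_mul (hexp t)
    refine this.congr_deriv ?_
    ring
  have hconst := is_const_of_deriv_eq_zero (f := fun t : ℝ => α (t • z) * Complex.exp (-((t : ℂ) * c z)))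
      (fun t => (hg t).differentiableAt) (fun t => (hg t).deriv) 1 0
  simp [hα0] at hconst
  have : α z * Complex.exp (-(c z)) = 1 := by simpa using hconst
  have := congrArg (· * Complex.exp (c z)) this
  simpa [mul_assoc, ← Complex.exp_add] using this

private theorem stmt7_aux (n : ℕ) (α : (Fin n → ℂ) → ℂ)
    (hsmooth : ContDiff ℝ (⊤ : ℕ∞) α) (h0 : ∀ z : Fin n → ℂ, α z ≠ 0)
    (hmul : ∀ z w : Fin n → ℂ, α (z + w) = α z * α w)
    (hexp : ∀ z, α z = Complex.exp (fderiv ℝ α 0 z)) :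
    ∃! β : (Fin n → ℂ) → ℂ,
      (∀ z w : Fin n → ℂ, β (z + w) = β z * β w) ∧
      (∀ z : Fin n → ℂ, ‖β z‖ = 1) ∧
      Differentiable ℂ (fun z : Fin n → ℂ => α z * (β z)⁻¹) := by
  set c : (Fin n → ℂ) →L[ℝ] ℂ := fderiv ℝ α 0 with hc
  set t : (Fin n → ℂ) → ℝ := fun z => (c z).im + (c (Complex.I • z)).re with ht
  set β : (Fin n → ℂ) → ℂ := fun z => Complex.exp (Complex.I * (t z : ℂ)) with hβ
  have hIsm : ∀ (r : ℝ) (x : Fin n → ℂ), ((r : ℂ)) • x = r • x := by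
    intro r x; funext i; simp [Complex.real_smul]
  -- the complex-linear map L
  set Lfun : (Fin n → ℂ) → ℂ :=
    fun z => ((c z).re : ℂ) - Complex.I * ((c (Complex.I • z)).re : ℂ) with hL
  have Ladd : ∀ x y, Lfun (x + y) = Lfun x + Lfun y := by
    intro x y
    simp only [hL, smul_add, map_add, Complex.add_re]
    push_cast; ring
  have Lsmul : ∀ (s : ℂ) (x : Fin n → ℂ), Lfun (s • x) = s * Lfun x := by
    intro s x
    have hx : s • x = (s.re : ℝ) • x + (s.im : ℝ) • (Complex.I • x) := by
      funext i
      simp only [Pi.add_apply, Pi.smul_apply, smul_eq_mul, Complex.real_smul]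
      apply Complex.ext <;> simp <;> ring
    have hx2 : Complex.I • (s • x) = (s.re : ℝ) • (Complex.I • x) - (s.im : ℝ) • x := by
      funext i
      simp only [Pi.sub_apply, Pi.smul_apply, smul_eq_mul, Complex.real_smul]
      apply Complex.ext <;> simp <;> ring
    show (↑(c (s • x)).re : ℂ) - Complex.I * ↑(c (Complex.I • (s • x))).re
        = s * ((↑(c x).re : ℂ) - Complex.I * ↑(c (Complex.I • x)).re)
    rw [hx2, hx]
    simp only [map_add, map_sub, map_smul, Complex.add_re, Complex.sub_re, Complex.smul_re]
    apply Complex.ext <;> simp <;> ring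
  set Lm : (Fin n → ℂ) →ₗ[ℂ] ℂ :=
    { toFun := Lfun, map_add' := Ladd, map_smul' := Lsmul } with hLm
  have hLdiff : Differentiable ℂ Lfun := by
    have := (LinearMap.toContinuousLinearMap Lm).differentiable
    simpa [hLm] using this
  have hβ0 : ∀ z, β z ≠ 0 := fun z => Complex.exp_ne_zero _
  have hratio : (fun z : Fin n → ℂ => α z * (β z)⁻¹) = fun z => Complex.exp (Lfun z) := by
    funext z
    rw [hexp z]
    show Complex.exp (c z) * (Complex.exp (Complex.I * (t z : ℂ)))⁻¹ = _
    rw [← Complex.exp_neg, ← Complex.exp_add]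
    congr 1
    simp only [ht, hL]
    apply Complex.ext <;> simp <;> ring
  refine ⟨β, ⟨?_, ?_, ?_⟩, ?_⟩
  · intro z w
    simp only [hβ, ht, smul_add, map_add, Complex.add_re, Complex.add_im, ← Complex.exp_add]
    congr 1; push_cast; ring
  · intro z
    simp [hβ, Complex.norm_exp]
  · rw [hratio]
    exact Complex.differentiable_exp.comp hLdiff
  · intro β' ⟨hb'mul, hb'norm, hb'diff⟩
    have hb'0 : ∀ z, β' z ≠ 0 := by
      intro z hz; have := hb'norm z; rw [hz] at this; simp at this
    set γ : (Fin n → ℂ) → ℂ := fun z => β' z * (β z)⁻¹ with hγ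
    have hγeq : γ = fun z => (α z * (β z)⁻¹) * (α z * (β' z)⁻¹)⁻¹ := by
      funext z
      field_simp [hγ]
      simp only [hγ]; rw [mul_div_mul_left _ _ (h0 z)]
      ring
    have hγdiff : Differentiable ℂ γ := by
      rw [hγeq]
      refine Differentiable.mul ?_ (Differentiable.inv hb'diff ?_)
      · rw [hratio]; exact Complex.differentiable_exp.comp hLdiff
      · intro z; exact mul_ne_zero (h0 z) (inv_ne_zero (hb'0 z))
    have hγnorm : ∀ z, ‖γ z‖ = 1 := by
      intro z
      have hn : ‖β z‖ = 1 := by simp [hβ, Complex.norm_exp]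
      simp [hγ, norm_mul, norm_inv, hn, hb'norm z]
    have hbd : IsBounded (range γ) := by
      apply isBounded_iff_forall_norm_le.2 ⟨1, ?_⟩
      rintro x ⟨z, rfl⟩; exact le_of_eq (hγnorm z)
    have hβ'0v : β' 0 = 1 := by
      have h : β' 0 * β' 0 = β' 0 * 1 := by simpa using (hb'mul 0 0).symm
      exact mul_left_cancel₀ (hb'0 0) h
    have hβ0v : β 0 = 1 := by simp [hβ, ht]
    funext z
    have := hγdiff.apply_eq_apply_of_bounded hbd z 0
    rw [hγ] at this
    simp only [hβ0v, hβ'0v, inv_one, mul_one] at this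
    have h2 : β' z * (β z)⁻¹ * β z = 1 * β z := by rw [this]
    rwa [inv_mul_cancel_right₀ (hβ0 z), one_mul] at h2

/-- Lemma 3.5 of the paper: for every smooth character `α` of `(ℂⁿ, +)` with values in
`ℂ*` there exists a unique unitary character `β` such that `α · β⁻¹` is holomorphic. -/
theorem stmt_7 (n : ℕ) (hn : 0 < n) (α : (Fin n → ℂ) → ℂ)
    (hsmooth : ContDiff ℝ (⊤ : ℕ∞) α) (h0 : ∀ z : Fin n → ℂ, α z ≠ 0)
    (hmul : ∀ z w : Fin n → ℂ, α (z + w) = α z * α w) :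
    ∃! β : (Fin n → ℂ) → ℂ,
      (∀ z w : Fin n → ℂ, β (z + w) = β z * β w) ∧
      (∀ z : Fin n → ℂ, ‖β z‖ = 1) ∧
      Differentiable ℂ (fun z : Fin n → ℂ => α z * (β z)⁻¹) := by
  exact stmt7_aux n α hsmooth h0 hmul (char_exp α hsmooth h0 hmul)
end

section
/- Let G be a topological group, N a normal subgroup of G and H a subgroup of G such that the multiplication map N × H → G, (n, h) ↦ n·h, is a homeomorphism (where N and H carry the subspace topologies and N × H the product topology). Let Γ'' ≤ N and Γ' ≤ H be subgroups such that: Γ'' is discrete in G and there is a compact set K_N ⊆ N with K_N·Γ'' = N; Γ' is discrete in G and there is a compact set K_H ⊆ H with K_H·Γ' = H; and γ'·γ''·γ'⁻¹ ∈ Γ'' for all γ' ∈ Γ', γ'' ∈ Γ''. Then Γ = {γ''·γ' : γ'' ∈ Γ'', γ' ∈ Γ'} is a subgroup of G, Γ is discrete in G, and there exists a compact set K ⊆ G with K·Γ = G. -/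
open scoped Pointwise

/-!
Since `Γ'` normalizes `Γ''`, the product set `Γ''·Γ'` is the subgroup `Γ'' ⊔ Γ'`. Under the
homeomorphism `N × H ≃ₜ G` it is the image of `Γ'' × Γ'`, a product of discrete spaces, hence
discrete. For cocompactness write `g = n·h` with `h = k·γ'`, `k ∈ K_H`; then
`g = k·(k⁻¹ n k)·γ'`, and `k⁻¹ n k ∈ N = K_N·Γ''` by normality, so `g ∈ K_H·K_N·Γ''·Γ'`.
-/

theorem IsHomeomorph.discreteTopology_image_prod {X Y Z : Type*} [TopologicalSpace X]
    [TopologicalSpace Y] [TopologicalSpace Z] {f : X × Y → Z} (hf : IsHomeomorph f)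
    (s : Set X) (t : Set Y) [DiscreteTopology s] [DiscreteTopology t] :
    DiscreteTopology (f '' s ×ˢ t) :=
  ((Homeomorph.Set.prod s t).symm.trans ((hf.homeomorph f).image _)).discreteTopology

theorem Set.mul_eq_image_prod_of_subset {G : Type*} [Mul G] {S T s t : Set G}
    (hs : s ⊆ S) (ht : t ⊆ T) :
    s * t = (fun p : S × T => (p.1 : G) * p.2) ''
      ((Subtype.val ⁻¹' s) ×ˢ (Subtype.val ⁻¹' t)) := by
  ext g
  constructor
  · rintro ⟨a, ha, b, hb, rfl⟩
    exact ⟨(⟨a, hs ha⟩, ⟨b, ht hb⟩), ⟨ha, hb⟩, rfl⟩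
  · rintro ⟨⟨a, b⟩, ⟨ha, hb⟩, rfl⟩
    exact Set.mul_mem_mul ha hb

theorem Subgroup.Normal.coe_mul_subset_mul_mul {G : Type*} [Group G] {N H : Subgroup G}
    (hN : N.Normal) {KN KH A B : Set G} (hKN : (N : Set G) ⊆ KN * A)
    (hKH : (H : Set G) ⊆ KH * B) :
    (N : Set G) * H ⊆ KH * KN * (A * B) := by
  rintro _ ⟨n, hn, h, hh, rfl⟩
  obtain ⟨k, hk, b, hb, rfl⟩ := hKH hh
  obtain ⟨k', hk', a, ha, hconj⟩ := hKN (by simpa using hN.conj_mem n hn k⁻¹)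
  refine ⟨k * k', Set.mul_mem_mul hk hk', a * b, Set.mul_mem_mul ha hb, ?_⟩
  calc k * k' * (a * b) = k * (k' * a) * b := by group
    _ = n * (k * b) := by simp only [hconj]; group

theorem Set.subset_mul_of_forall_eq_mul {G : Type*} [Mul G] {S K A : Set G}
    (h : ∀ x ∈ S, ∃ k ∈ K, ∃ a ∈ A, x = k * a) : S ⊆ K * A := by
  intro x hx
  obtain ⟨k, hk, a, ha, rfl⟩ := h x hx
  exact Set.mul_mem_mul hk ha

/-- Semidirect-product lattice construction: if `G = N ⋊ H` topologically (the
multiplication map `N × H → G` is a homeomorphism, `N` normal), `Γ'' ≤ N` and `Γ' ≤ H` are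
discrete cocompact subgroups of `N` resp. `H`, and conjugation by `Γ'` preserves `Γ''`,
then `Γ''·Γ'` is a discrete cocompact subgroup (lattice) of `G`. -/
theorem stmt_10 {G : Type*} [Group G] [TopologicalSpace G] [IsTopologicalGroup G]
    (N H : Subgroup G) (hN : N.Normal)
    (hhomeo : IsHomeomorph (fun p : N × H => (p.1 : G) * (p.2 : G)))
    (Γ'' Γ' : Subgroup G) (hΓ''N : Γ'' ≤ N) (hΓ'H : Γ' ≤ H)
    (hΓ''disc : DiscreteTopology Γ'')
    (hΓ''cocpt : ∃ K : Set G, K ⊆ (N : Set G) ∧ IsCompact K ∧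
      ∀ x ∈ N, ∃ k ∈ K, ∃ γ ∈ Γ'', x = k * γ)
    (hΓ'disc : DiscreteTopology Γ')
    (hΓ'cocpt : ∃ K : Set G, K ⊆ (H : Set G) ∧ IsCompact K ∧
      ∀ x ∈ H, ∃ k ∈ K, ∃ γ ∈ Γ', x = k * γ)
    (hconj : ∀ γ' ∈ Γ', ∀ γ'' ∈ Γ'', γ' * γ'' * γ'⁻¹ ∈ Γ'') :
    ∃ Γ : Subgroup G,
      (Γ : Set G) = {g : G | ∃ γ'' ∈ Γ'', ∃ γ' ∈ Γ', g = γ'' * γ'} ∧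
      DiscreteTopology Γ ∧
      ∃ K : Set G, IsCompact K ∧ ∀ g : G, ∃ k ∈ K, ∃ γ ∈ Γ, g = k * γ := by
  obtain ⟨KN, -, hKN, hKNcov⟩ := hΓ''cocpt
  obtain ⟨KH, -, hKH, hKHcov⟩ := hΓ'cocpt
  have hΓ : ((Γ'' ⊔ Γ' : Subgroup G) : Set G) = Γ'' * Γ' :=
    Subgroup.coe_mul_of_right_le_normalizer_left Γ'' Γ' (Subgroup.le_normalizer_iff.mpr hconj)
  refine ⟨Γ'' ⊔ Γ', ?_, ?_, KH * KN, hKH.mul hKN, fun g => ?_⟩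
  · ext g
    simp [hΓ, Set.mem_mul, eq_comm]
  · have : DiscreteTopology ((↑) ⁻¹' (Γ'' : Set G) : Set N) :=
      .preimage_of_continuous_injective _ continuous_subtype_val Subtype.val_injective
    have : DiscreteTopology ((↑) ⁻¹' (Γ' : Set G) : Set H) :=
      .preimage_of_continuous_injective _ continuous_subtype_val Subtype.val_injective
    change DiscreteTopology ((Γ'' ⊔ Γ' : Subgroup G) : Set G)
    rw [hΓ, Set.mul_eq_image_prod_of_subset hΓ''N hΓ'H]
    exact hhomeo.discreteTopology_image_prod _ _
  · have hg : g ∈ (N : Set G) * H := by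
      obtain ⟨p, rfl⟩ := hhomeo.surjective g
      exact Set.mul_mem_mul p.1.2 p.2.2
    obtain ⟨k, hk, γ, hγ, rfl⟩ := hN.coe_mul_subset_mul_mul
      (Set.subset_mul_of_forall_eq_mul hKNcov) (Set.subset_mul_of_forall_eq_mul hKHcov) hg
    exact ⟨k, hk, γ, hΓ.symm.subset hγ, rfl⟩
end
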